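/- arXiv:hep-th/0312259 — 5 statements merged into one kernel-verified Lean document; each statement's English description precedes it below -/
import Mathlib

section
/- Fix a nonnegative integer k. For SU(2) at level k, the subgroup of ℤ generated by all differences Q(λ) − det(ŵ)·Q(ŵ·λ), where Q(λ) = λ + 1, where ŵ ranges over the shifted level-k affine Weyl group action ŵ·λ = ε(λ+1) − 1 + 2(k+2)m with ε ∈ {+1, −1}, m ∈ ℤ, det(ŵ) = ε, and λ ranges over ℤ, is exactly the subgroup 2(k+2)ℤ. Equivalently, a positive integer x satisfies Q(λ) ≡ det(ŵ)·Q(ŵ·λ) (mod x) for all λ ∈ ℤ and all ŵ if and only if x divides 2(k+2); the resulting charge group is ℤ/2(k+2)ℤ. -/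
/-- For SU(2) at level `k`, with charge `Q(λ) = λ + 1` and the shifted level-`k` affine
Weyl action `ŵ·λ = ε(λ+1) - 1 + 2(k+2)m` (with `det ŵ = ε ∈ {±1}`, `m ∈ ℤ`), the subgroup
of `ℤ` generated by all differences `Q(λ) - det(ŵ)·Q(ŵ·λ)` is exactly `2(k+2)ℤ`;
equivalently, a positive integer `x` satisfies `Q(λ) ≡ det(ŵ)·Q(ŵ·λ) (mod x)` for all
`λ` and `ŵ` if and only if `x ∣ 2(k+2)`. -/
theorem su2_affine_weyl_charge_group (k : ℕ) :
    AddSubgroup.closure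
        {d : ℤ | ∃ lam ε m : ℤ, (ε = 1 ∨ ε = -1) ∧
          d = (lam + 1) - ε * ((ε * (lam + 1) - 1 + 2 * ((k : ℤ) + 2) * m) + 1)} =
      AddSubgroup.zmultiples (2 * ((k : ℤ) + 2)) ∧
    ∀ x : ℤ, 0 < x →
      ((∀ lam ε m : ℤ, (ε = 1 ∨ ε = -1) →
          Int.ModEq x (lam + 1) (ε * ((ε * (lam + 1) - 1 + 2 * ((k : ℤ) + 2) * m) + 1))) ↔
        x ∣ 2 * ((k : ℤ) + 2)) := by
  set c : ℤ := 2 * ((k : ℤ) + 2) with hc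
  have key : ∀ lam ε m : ℤ, (ε = 1 ∨ ε = -1) →
      (lam + 1) - ε * ((ε * (lam + 1) - 1 + c * m) + 1) = -(ε * (c * m)) := by
    rintro lam ε m (rfl | rfl) <;> ring
  constructor
  · apply le_antisymm
    · rw [AddSubgroup.closure_le]
      rintro d ⟨lam, ε, m, hε, rfl⟩
      rw [key lam ε m hε]
      exact AddSubgroup.mem_zmultiples_iff.2 ⟨-(ε * m), by simp only [smul_eq_mul]; ring⟩
    · rw [AddSubgroup.zmultiples_le]
      apply AddSubgroup.subset_closure
      refine ⟨0, -1, 1, Or.inr rfl, ?_⟩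
      rw [key 0 (-1) 1 (Or.inr rfl)]; ring
  · intro x hx
    constructor
    · intro h
      have hd := Int.ModEq.dvd (h 0 (-1) 1 (Or.inr rfl))
      have heq : ((-1 : ℤ) * ((-1) * (0 + 1) - 1 + c * 1 + 1) - (0 + 1)) = -c := by ring
      rw [heq] at hd
      exact dvd_neg.mp hd
    · intro hdvd lam ε m hε
      refine (Int.modEq_iff_dvd.mpr ?_).symm
      rw [key lam ε m hε]
      exact dvd_neg.mpr ((hdvd.mul_right m).mul_left ε)
end

section
/- The quotient ring R = ℤ[x₁,x₂]/I, where I is the ideal generated by x₁² + x₁x₂ + x₂² and x₁³, is a free ℤ-module of rank 6, with basis given by the images of the six Schubert polynomials 1, x₁, x₁ + x₂, x₁x₂, x₁², x₁²x₂. -/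
open MvPolynomial

/-- The ideal `I = (x₁² + x₁x₂ + x₂², x₁³)` of `ℤ[x₁, x₂]`. -/
noncomputable def borelIdealSU3 : Ideal (MvPolynomial (Fin 2) ℤ) :=
  Ideal.span {X 0 ^ 2 + X 0 * X 1 + X 1 ^ 2, X 0 ^ 3}

/-- `R = ℤ[x₁,x₂]/I`, the integral cohomology ring of the flag manifold SU(3)/U(1)². -/
abbrev BorelRingSU3 : Type := MvPolynomial (Fin 2) ℤ ⧸ borelIdealSU3

/-- The class `x₁` in `R`. -/
noncomputable def bx₁ : BorelRingSU3 := Ideal.Quotient.mk borelIdealSU3 (X 0)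

/-- The class `x₂` in `R`. -/
noncomputable def bx₂ : BorelRingSU3 := Ideal.Quotient.mk borelIdealSU3 (X 1)

namespace BorelAux

noncomputable abbrev AA : Type := AdjoinRoot (Polynomial.X ^ 3 : Polynomial ℤ)

instance : Nontrivial AA := by
  apply Ideal.Quotient.nontrivial_iff.mpr
  rw [Ne, Ideal.span_singleton_eq_top]
  intro h
  simpa using Polynomial.natDegree_eq_zero_of_isUnit h

noncomputable def tA : AA := AdjoinRoot.root _

lemma tA_cube : tA ^ 3 = 0 := by
  have := AdjoinRoot.eval₂_root (Polynomial.X ^ 3 : Polynomial ℤ)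
  simpa [tA] using this

noncomputable def qB : Polynomial AA :=
  Polynomial.X ^ 2 + (Polynomial.C tA * Polynomial.X + Polynomial.C (tA ^ 2))

lemma qB_deg_lt : (Polynomial.C tA * Polynomial.X + Polynomial.C (tA ^ 2)).degree <
    (2 : WithBot ℕ) := by
  apply lt_of_le_of_lt (Polynomial.degree_add_le _ _)
  apply max_lt
  · exact lt_of_le_of_lt (Polynomial.degree_C_mul_X_le _) (by norm_num)
  · exact lt_of_le_of_lt Polynomial.degree_C_le (by norm_num)

lemma qB_monic : qB.Monic := Polynomial.monic_X_pow_add qB_deg_lt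

lemma qB_natDegree : qB.natDegree = 2 := by
  have h : qB.degree = 2 := by
    rw [qB, Polynomial.degree_add_eq_left_of_degree_lt, Polynomial.degree_X_pow]
    · rfl
    · rw [Polynomial.degree_X_pow]; exact qB_deg_lt
  exact Polynomial.natDegree_eq_of_degree_eq_some h

noncomputable abbrev BB : Type := AdjoinRoot qB

noncomputable def uB : BB := AdjoinRoot.root _
noncomputable def tB : BB := algebraMap AA BB tA

lemma tB_cube : tB ^ 3 = 0 := by
  rw [tB, ← map_pow, tA_cube, map_zero]

lemma uB_rel : uB ^ 2 + tB * uB + tB ^ 2 = 0 := by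
  have h : uB ^ 2 + (tB * uB + tB ^ 2) = 0 := by
    have e : AdjoinRoot.mk qB (Polynomial.X ^ 2 + (Polynomial.C tA * Polynomial.X +
        Polynomial.C (tA ^ 2))) = 0 := AdjoinRoot.mk_self
    simpa [uB, tB, map_add, map_mul, map_pow, AdjoinRoot.mk_X, AdjoinRoot.mk_C,
      AdjoinRoot.algebraMap_eq] using e
  linear_combination h

lemma uB_cube : uB ^ 3 = 0 := by
  linear_combination (uB - tB) * uB_rel + tB_cube

noncomputable def pbA : PowerBasis ℤ AA :=
  AdjoinRoot.powerBasis' (Polynomial.monic_X_pow 3)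

noncomputable def pbB : PowerBasis AA BB := AdjoinRoot.powerBasis' qB_monic

lemma pbA_dim : pbA.dim = 3 := by simp [pbA]
lemma pbB_dim : pbB.dim = 2 := by simp [pbB, qB_natDegree]

noncomputable def bB : Module.Basis (Fin 3 × Fin 2) ℤ BB :=
  (pbA.basis.reindex (finCongr pbA_dim)).smulTower (pbB.basis.reindex (finCongr pbB_dim))

lemma bB_apply (i : Fin 3) (j : Fin 2) : bB (i, j) = tB ^ (i : ℕ) * uB ^ (j : ℕ) := by
  rw [bB, Module.Basis.smulTower_apply, Module.Basis.reindex_apply, Module.Basis.reindex_apply,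
    PowerBasis.basis_eq_pow, PowerBasis.basis_eq_pow, Algebra.smul_def, map_pow]
  congr 1


lemma r1 : bx₁ ^ 2 + bx₁ * bx₂ + bx₂ ^ 2 = 0 := by
  rw [bx₁, bx₂, ← map_pow, ← map_mul, ← map_pow, ← map_add, ← map_add,
    Ideal.Quotient.eq_zero_iff_mem, borelIdealSU3]
  exact Ideal.subset_span (Set.mem_insert _ _)

lemma r2 : bx₁ ^ 3 = 0 := by
  rw [bx₁, ← map_pow, Ideal.Quotient.eq_zero_iff_mem, borelIdealSU3]
  exact Ideal.subset_span (Set.mem_insert_of_mem _ rfl)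

lemma hker : ∀ p ∈ borelIdealSU3, (aeval ![uB, tB] : MvPolynomial (Fin 2) ℤ →ₐ[ℤ] BB) p = 0 := by
  intro p hp
  have hle : borelIdealSU3 ≤ RingHom.ker (aeval ![uB, tB] : MvPolynomial (Fin 2) ℤ →ₐ[ℤ] BB) := by
    rw [borelIdealSU3, Ideal.span_le]
    rintro q hq
    simp only [Set.mem_insert_iff, Set.mem_singleton_iff] at hq
    rcases hq with rfl | rfl <;>
      simp only [SetLike.mem_coe, RingHom.mem_ker, map_add, map_mul, map_pow, aeval_X,
        Matrix.cons_val_zero, Matrix.cons_val_one, Matrix.head_cons]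
    · linear_combination uB_rel
    · exact uB_cube
  exact RingHom.mem_ker.mp (hle hp)

noncomputable def ψ : BorelRingSU3 →ₐ[ℤ] BB :=
  Ideal.Quotient.liftₐ borelIdealSU3 (aeval ![uB, tB]) hker

lemma ψ_mk (p : MvPolynomial (Fin 2) ℤ) :
    ψ (Ideal.Quotient.mk borelIdealSU3 p) = aeval ![uB, tB] p := by
  rw [ψ, Ideal.Quotient.liftₐ_apply]
  rfl

lemma ψ_bx₁ : ψ bx₁ = uB := by rw [bx₁, ψ_mk]; simp
lemma ψ_bx₂ : ψ bx₂ = tB := by rw [bx₂, ψ_mk]; simp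

noncomputable def sfam : Fin 6 → BorelRingSU3 :=
  ![1, bx₁, bx₁ + bx₂, bx₁ * bx₂, bx₁ ^ 2, bx₁ ^ 2 * bx₂]

noncomputable abbrev P : Submodule ℤ BorelRingSU3 := Submodule.span ℤ (Set.range sfam)

lemma hmem (i : Fin 6) : sfam i ∈ P := Submodule.subset_span ⟨i, rfl⟩

lemma mem0 : (1 : BorelRingSU3) ∈ P := hmem 0
lemma mem1 : bx₁ ∈ P := hmem 1
lemma mem2 : bx₁ + bx₂ ∈ P := hmem 2
lemma mem3 : bx₁ * bx₂ ∈ P := hmem 3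
lemma mem4 : bx₁ ^ 2 ∈ P := hmem 4
lemma mem5 : bx₁ ^ 2 * bx₂ ∈ P := hmem 5

lemma mul_bx₁_mem : ∀ z ∈ P, z * bx₁ ∈ P := by
  intro z hz
  induction hz using Submodule.span_induction with
  | mem x hx =>
    obtain ⟨i, rfl⟩ := hx
    fin_cases i
    · show (1 : BorelRingSU3) * bx₁ ∈ P
      rw [one_mul]; exact mem1
    · show bx₁ * bx₁ ∈ P
      rw [show bx₁ * bx₁ = bx₁ ^ 2 from by ring]; exact mem4
    · show (bx₁ + bx₂) * bx₁ ∈ P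
      rw [show (bx₁ + bx₂) * bx₁ = bx₁ ^ 2 + bx₁ * bx₂ from by ring]
      exact P.add_mem mem4 mem3
    · show bx₁ * bx₂ * bx₁ ∈ P
      rw [show bx₁ * bx₂ * bx₁ = bx₁ ^ 2 * bx₂ from by ring]; exact mem5
    · show bx₁ ^ 2 * bx₁ ∈ P
      rw [show bx₁ ^ 2 * bx₁ = 0 from by linear_combination r2]; exact P.zero_mem
    · show bx₁ ^ 2 * bx₂ * bx₁ ∈ P
      rw [show bx₁ ^ 2 * bx₂ * bx₁ = 0 from by linear_combination bx₂ * r2]; exact P.zero_mem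
  | zero => rw [zero_mul]; exact P.zero_mem
  | add x y _ _ hx hy => rw [add_mul]; exact P.add_mem hx hy
  | smul c x _ hx => rw [smul_mul_assoc]; exact P.smul_mem c hx

lemma mul_bx₂_mem : ∀ z ∈ P, z * bx₂ ∈ P := by
  intro z hz
  induction hz using Submodule.span_induction with
  | mem x hx =>
    obtain ⟨i, rfl⟩ := hx
    fin_cases i
    · show (1 : BorelRingSU3) * bx₂ ∈ P
      rw [show (1 : BorelRingSU3) * bx₂ = (bx₁ + bx₂) - bx₁ from by ring]
      exact P.sub_mem mem2 mem1
    · show bx₁ * bx₂ ∈ P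
      exact mem3
    · show (bx₁ + bx₂) * bx₂ ∈ P
      rw [show (bx₁ + bx₂) * bx₂ = -(bx₁ ^ 2) from by linear_combination r1]
      exact P.neg_mem mem4
    · show bx₁ * bx₂ * bx₂ ∈ P
      rw [show bx₁ * bx₂ * bx₂ = -(bx₁ ^ 2 * bx₂) from by linear_combination bx₁ * r1 - r2]
      exact P.neg_mem mem5
    · show bx₁ ^ 2 * bx₂ ∈ P
      exact mem5
    · show bx₁ ^ 2 * bx₂ * bx₂ ∈ P
      rw [show bx₁ ^ 2 * bx₂ * bx₂ = 0 from by
        linear_combination bx₁ ^ 2 * r1 - (bx₁ + bx₂) * r2]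
      exact P.zero_mem
  | zero => rw [zero_mul]; exact P.zero_mem
  | add x y _ _ hx hy => rw [add_mul]; exact P.add_mem hx hy
  | smul c x _ hx => rw [smul_mul_assoc]; exact P.smul_mem c hx

lemma span_top : P = ⊤ := by
  rw [eq_top_iff]
  rintro z -
  obtain ⟨p, rfl⟩ := Ideal.Quotient.mk_surjective z
  induction p using MvPolynomial.induction_on with
  | C a =>
    have h1 : (C a : MvPolynomial (Fin 2) ℤ) = (a : MvPolynomial (Fin 2) ℤ) := by
      simp
    rw [h1, map_intCast, show ((a : BorelRingSU3)) = a • (1 : BorelRingSU3) from by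
      rw [zsmul_eq_mul, mul_one]]
    exact P.smul_mem a mem0
  | add p q hp hq => rw [map_add]; exact P.add_mem hp hq
  | mul_X p i hp =>
    rw [map_mul]
    fin_cases i
    · exact mul_bx₁_mem _ hp
    · exact mul_bx₂_mem _ hp

noncomputable def φ : (Fin 6 → ℤ) →ₗ[ℤ] BorelRingSU3 := (Pi.basisFun ℤ (Fin 6)).constr ℤ sfam

lemma φ_basis (i : Fin 6) : φ (Pi.basisFun ℤ (Fin 6) i) = sfam i := Module.Basis.constr_basis _ _ _ i

lemma φ_surj : Function.Surjective φ := by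
  rw [← LinearMap.range_eq_top, eq_top_iff, ← span_top, Submodule.span_le]
  rintro _ ⟨i, rfl⟩
  exact ⟨Pi.basisFun ℤ (Fin 6) i, φ_basis i⟩

lemma φ_apply (c : Fin 6 → ℤ) : φ c = ∑ i, c i • sfam i := by
  rw [φ, Module.Basis.constr_apply_fintype]
  simp [Pi.basisFun_equivFun]

def gfun (c : Fin 6 → ℤ) (ij : Fin 3 × Fin 2) : ℤ :=
  match ij.1.val, ij.2.val with
  | 0, 0 => c 0
  | 0, _ => c 1 + c 2
  | 1, 0 => c 2
  | 1, _ => c 3 - c 4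
  | 2, 0 => -(c 4)
  | _, _ => -(c 5)

lemma φ_inj : Function.Injective φ := by
  rw [injective_iff_map_eq_zero]
  intro c hc
  have h0 : c 0 • (1 : BB) + c 1 • uB + c 2 • (uB + tB) + c 3 • (uB * tB)
      + c 4 • (uB ^ 2) + c 5 • (uB ^ 2 * tB) = 0 := by
    have h := congrArg ψ hc
    rw [φ_apply, map_sum, map_zero, Fin.sum_univ_six] at h
    simp only [map_smul] at h
    rw [show ψ (sfam 0) = 1 from map_one ψ,
      show ψ (sfam 1) = uB from ψ_bx₁,
      show ψ (sfam 2) = uB + tB from by rw [show sfam 2 = bx₁ + bx₂ from rfl, map_add, ψ_bx₁, ψ_bx₂],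
      show ψ (sfam 3) = uB * tB from by rw [show sfam 3 = bx₁ * bx₂ from rfl, map_mul, ψ_bx₁, ψ_bx₂],
      show ψ (sfam 4) = uB ^ 2 from by rw [show sfam 4 = bx₁ ^ 2 from rfl, map_pow, ψ_bx₁],
      show ψ (sfam 5) = uB ^ 2 * tB from by
        rw [show sfam 5 = bx₁ ^ 2 * bx₂ from rfl, map_mul, map_pow, ψ_bx₁, ψ_bx₂]] at h
    exact h
  have li := bB.linearIndependent
  rw [Fintype.linearIndependent_iff] at li
  have hall := li (gfun c) ?_
  · have h00 : c 0 = 0 := hall (0, 0)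
    have h01 : c 1 + c 2 = 0 := hall (0, 1)
    have h10 : c 2 = 0 := hall (1, 0)
    have h11 : c 3 - c 4 = 0 := hall (1, 1)
    have h20 : -(c 4) = 0 := hall (2, 0)
    have h21 : -(c 5) = 0 := hall (2, 1)
    have hc1 : c 1 = 0 := by linarith
    have hc3 : c 3 = 0 := by linarith
    have hc4 : c 4 = 0 := by linarith
    have hc5 : c 5 = 0 := by linarith
    funext i
    fin_cases i
    exacts [h00, hc1, h10, hc3, hc4, hc5]
  · rw [Fintype.sum_prod_type, Fin.sum_univ_three]
    simp only [Fin.sum_univ_two, bB_apply]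
    rw [show gfun c (0, 0) = c 0 from rfl, show gfun c (0, 1) = c 1 + c 2 from rfl,
      show gfun c (1, 0) = c 2 from rfl, show gfun c (1, 1) = c 3 - c 4 from rfl,
      show gfun c (2, 0) = -(c 4) from rfl, show gfun c (2, 1) = -(c 5) from rfl]
    simp only [Fin.val_zero, Fin.val_one, pow_zero, pow_one, mul_one, one_mul,
      zsmul_eq_mul]
    rw [show ((2 : Fin 3) : ℕ) = 2 from rfl]
    simp only [zsmul_eq_mul] at h0
    push_cast at h0 ⊢
    linear_combination h0 - (c 4 + c 5 * tB) * uB_rel + c 5 * tB_cube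

end BorelAux

/-- `R = ℤ[x₁,x₂]/(x₁² + x₁x₂ + x₂², x₁³)` is a free `ℤ`-module of rank 6, with basis
the images of the six Schubert polynomials `1, x₁, x₁+x₂, x₁x₂, x₁², x₁²x₂`. -/
theorem borelRingSU3_free_rank_six_schubert_basis :
    ∃ b : Module.Basis (Fin 6) ℤ BorelRingSU3,
      ∀ i : Fin 6,
        b i = ![1, bx₁, bx₁ + bx₂, bx₁ * bx₂, bx₁ ^ 2, bx₁ ^ 2 * bx₂] i := by
  refine ⟨(Pi.basisFun ℤ (Fin 6)).map
    (LinearEquiv.ofBijective BorelAux.φ ⟨BorelAux.φ_inj, BorelAux.φ_surj⟩), fun i => ?_⟩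
  rw [Module.Basis.map_apply]
  exact BorelAux.φ_basis i
end

section
/- In the ring R = ℤ[x₁,x₂]/I, for all integers λ₁, λ₂, the element F = (λ₁+λ₂)x₁ + λ₂x₂ satisfies F³ = 3(λ₁²λ₂ + λ₁λ₂²)·x₁²x₂. Consequently the naïve geometric charge Q'_geo(λ) = (1/3!)·∫ F³ of the regular SU(3) brane labelled λ equals (1/2)(λ₁²λ₂ + λ₁λ₂²), which is not equal to the dimension (1/2)(λ₁+1)(λ₂+1)(λ₁+λ₂+2) of the irreducible su(3)-module of highest weight λ. -/
open MvPolynomial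

/-- In `R = ℤ[x₁,x₂]/(x₁² + x₁x₂ + x₂², x₁³)`, the flux class `F = (λ₁+λ₂)x₁ + λ₂x₂`
satisfies `F³ = 3(λ₁²λ₂ + λ₁λ₂²)·x₁²x₂`, so the naïve geometric charge
`Q'_geo(λ) = (1/3!)∫F³ = (1/2)(λ₁²λ₂ + λ₁λ₂²)`, which is not equal to the dimension
`(1/2)(λ₁+1)(λ₂+1)(λ₁+λ₂+2)` of the irreducible su(3)-module of highest weight `λ`. -/
theorem borelRingSU3_naive_geometric_charge :
    (∀ l₁ l₂ : ℤ,
      ((l₁ + l₂) • bx₁ + l₂ • bx₂) ^ 3 =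
        (3 * (l₁ ^ 2 * l₂ + l₁ * l₂ ^ 2)) • (bx₁ ^ 2 * bx₂)) ∧
    ¬ ∀ l₁ l₂ : ℤ,
        ((l₁ : ℚ) ^ 2 * l₂ + l₁ * l₂ ^ 2) / 2 =
          ((l₁ : ℚ) + 1) * ((l₂ : ℚ) + 1) * ((l₁ : ℚ) + (l₂ : ℚ) + 2) / 2 := by
  constructor
  · intro l₁ l₂
    simp only [bx₁, bx₂, zsmul_eq_mul,
      ← map_intCast (Ideal.Quotient.mk borelIdealSU3), ← map_mul, ← map_add, ← map_pow]
    rw [Ideal.Quotient.eq]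
    have hmem : ((3 * (C l₁ + C l₂ : MvPolynomial (Fin 2) ℤ) * (C l₂ : MvPolynomial (Fin 2) ℤ) ^ 2
            - (C l₂ : MvPolynomial (Fin 2) ℤ) ^ 3) * X 0
          + (C l₂ : MvPolynomial (Fin 2) ℤ) ^ 3 * X 1) * (X 0 ^ 2 + X 0 * X 1 + X 1 ^ 2)
          + ((C l₁ + C l₂ : MvPolynomial (Fin 2) ℤ) ^ 3
            - 3 * (C l₁ + C l₂ : MvPolynomial (Fin 2) ℤ) * (C l₂ : MvPolynomial (Fin 2) ℤ) ^ 2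
            + (C l₂ : MvPolynomial (Fin 2) ℤ) ^ 3) * X 0 ^ 3 ∈ borelIdealSU3 :=
      Ideal.add_mem _
        (Ideal.mul_mem_left _ _ (Ideal.subset_span (Set.mem_insert _ _)))
        (Ideal.mul_mem_left _ _ (Ideal.subset_span (Set.mem_insert_of_mem _ rfl)))
    convert hmem using 1
    push_cast
    simp only [← map_intCast (C : ℤ →+* MvPolynomial (Fin 2) ℤ), Int.cast_id]
    ring
  · intro h
    have := h 0 0
    norm_num at this
end

section
/- In the ring R = ℤ[x₁,x₂]/I, set c₁ = 4x₁ + 2x₂, c₂ = 6x₁² + 6x₁x₂, and, for integers λ₁, λ₂, F = (λ₁+λ₂)x₁ + λ₂x₂. Then c₁·c₂ + 2(c₁² + c₂)·F + 6c₁·F² + 4F³ = 12(λ₁+1)(λ₂+1)(λ₁+λ₂+2)·x₁²x₂ in R. Equivalently, in R⊗ℚ, (1/24)c₁c₂ + (1/12)(c₁²+c₂)F + (1/4)c₁F² + (1/6)F³ = (1/2)(λ₁+1)(λ₂+1)(λ₁+λ₂+2)·x₁²x₂, so the geometric charge Q_geo(λ) = ∫ e^{F_λ} Td(T(SU(3)/U(1)²))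 of the regular brane labelled λ equals (1/2)(λ₁+1)(λ₂+1)(λ₁+λ₂+2), the dimension of the irreducible su(3)-module of highest weight λ; hence the geometric charge coincides with the algebraic charge for regular branes in SU(3). -/
open MvPolynomial

/-- The ideal `I_ℚ = (x₁² + x₁x₂ + x₂², x₁³)` of `ℚ[x₁, x₂]`. -/
noncomputable def borelIdealSU3Q : Ideal (MvPolynomial (Fin 2) ℚ) :=
  Ideal.span {X 0 ^ 2 + X 0 * X 1 + X 1 ^ 2, X 0 ^ 3}

/-- `R ⊗ ℚ = ℚ[x₁,x₂]/I_ℚ`, the rational cohomology ring of SU(3)/U(1)². -/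
abbrev BorelRingSU3Q : Type := MvPolynomial (Fin 2) ℚ ⧸ borelIdealSU3Q

/-- The class `x₁` in `R ⊗ ℚ`. -/
noncomputable def qx₁ : BorelRingSU3Q := Ideal.Quotient.mk borelIdealSU3Q (X 0)

/-- The class `x₂` in `R ⊗ ℚ`. -/
noncomputable def qx₂ : BorelRingSU3Q := Ideal.Quotient.mk borelIdealSU3Q (X 1)

set_option maxHeartbeats 1000000 in
/-- With `c₁ = 4x₁ + 2x₂`, `c₂ = 6x₁² + 6x₁x₂` and `F = (λ₁+λ₂)x₁ + λ₂x₂`, one has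
`c₁c₂ + 2(c₁² + c₂)F + 6c₁F² + 4F³ = 12(λ₁+1)(λ₂+1)(λ₁+λ₂+2)·x₁²x₂` in `R`; equivalently,
in `R ⊗ ℚ`, `(1/24)c₁c₂ + (1/12)(c₁²+c₂)F + (1/4)c₁F² + (1/6)F³
= (1/2)(λ₁+1)(λ₂+1)(λ₁+λ₂+2)·x₁²x₂`: the geometric charge
`Q_geo(λ) = ∫ e^{F_λ} Td(T(SU(3)/U(1)²)) = (1/2)(λ₁+1)(λ₂+1)(λ₁+λ₂+2) = dim L(λ)`
coincides with the algebraic charge for regular branes in SU(3). -/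
theorem borelRingSU3_geometric_charge_eq_dim (l₁ l₂ : ℤ) :
    ((4 * bx₁ + 2 * bx₂) * (6 * bx₁ ^ 2 + 6 * (bx₁ * bx₂)) +
        2 * (((4 * bx₁ + 2 * bx₂) ^ 2 + (6 * bx₁ ^ 2 + 6 * (bx₁ * bx₂))) *
          ((l₁ + l₂) • bx₁ + l₂ • bx₂)) +
        6 * ((4 * bx₁ + 2 * bx₂) * ((l₁ + l₂) • bx₁ + l₂ • bx₂) ^ 2) +
        4 * ((l₁ + l₂) • bx₁ + l₂ • bx₂) ^ 3 =
      (12 * (l₁ + 1) * (l₂ + 1) * (l₁ + l₂ + 2)) • (bx₁ ^ 2 * bx₂)) ∧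
    ((1 / 24 : ℚ) • ((4 * qx₁ + 2 * qx₂) * (6 * qx₁ ^ 2 + 6 * (qx₁ * qx₂))) +
        (1 / 12 : ℚ) • (((4 * qx₁ + 2 * qx₂) ^ 2 + (6 * qx₁ ^ 2 + 6 * (qx₁ * qx₂))) *
          (((l₁ : ℚ) + (l₂ : ℚ)) • qx₁ + (l₂ : ℚ) • qx₂)) +
        (1 / 4 : ℚ) • ((4 * qx₁ + 2 * qx₂) *
          (((l₁ : ℚ) + (l₂ : ℚ)) • qx₁ + (l₂ : ℚ) • qx₂) ^ 2) +
        (1 / 6 : ℚ) • ((((l₁ : ℚ) + (l₂ : ℚ)) • qx₁ + (l₂ : ℚ) • qx₂) ^ 3) =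
      ((((l₁ : ℚ) + 1) * ((l₂ : ℚ) + 1) * ((l₁ : ℚ) + (l₂ : ℚ) + 2)) / 2) •
        (qx₁ ^ 2 * qx₂)) := by
  constructor
  · -- integer branch
    have h1 : bx₁ ^ 2 + bx₁ * bx₂ + bx₂ ^ 2 = 0 := by
      simp only [bx₁, bx₂, ← map_pow, ← map_mul, ← map_add]
      exact Ideal.Quotient.eq_zero_iff_mem.mpr (Ideal.subset_span (Set.mem_insert _ _))
    have h2 : bx₁ ^ 3 = 0 := by
      simp only [bx₁, ← map_pow]
      exact Ideal.Quotient.eq_zero_iff_mem.mpr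
        (Ideal.subset_span (Set.mem_insert_of_mem _ rfl))
    have h3 : bx₁ ^ 2 * bx₂ + bx₁ * bx₂ ^ 2 = 0 := by linear_combination bx₁ * h1 - h2
    have h4 : bx₂ ^ 3 = 0 := by linear_combination bx₂ * h1 - h3
    simp only [zsmul_eq_mul]
    push_cast
    set u : BorelRingSU3 := (l₁ : BorelRingSU3)
    set v : BorelRingSU3 := (l₂ : BorelRingSU3)
    linear_combination (24 + 44*(u+v) + 24*(u+v)^2 + 4*(u+v)^3) * h2 +
      (12 + 8*(u+v) + 44*v + 24*(u+v)*v + 24*v^2 + 12*(u+v)*v^2) * h3 +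
      (8*v + 12*v^2 + 4*v^3) * h4
  · -- rational branch
    have h1 : qx₁ ^ 2 + qx₁ * qx₂ + qx₂ ^ 2 = 0 := by
      simp only [qx₁, qx₂, ← map_pow, ← map_mul, ← map_add]
      exact Ideal.Quotient.eq_zero_iff_mem.mpr (Ideal.subset_span (Set.mem_insert _ _))
    have h2 : qx₁ ^ 3 = 0 := by
      simp only [qx₁, ← map_pow]
      exact Ideal.Quotient.eq_zero_iff_mem.mpr
        (Ideal.subset_span (Set.mem_insert_of_mem _ rfl))
    have h3 : qx₁ ^ 2 * qx₂ + qx₁ * qx₂ ^ 2 = 0 := by linear_combination qx₁ * h1 - h2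
    have h4 : qx₂ ^ 3 = 0 := by linear_combination qx₂ * h1 - h3
    rw [show (1/12 : ℚ) = 2 * (1/24) by norm_num,
        show (1/4 : ℚ) = 6 * (1/24) by norm_num,
        show (1/6 : ℚ) = 4 * (1/24) by norm_num,
        show (((l₁ : ℚ) + 1) * ((l₂ : ℚ) + 1) * ((l₁ : ℚ) + (l₂ : ℚ) + 2)) / 2
          = (12 * ((l₁ : ℚ) + 1) * ((l₂ : ℚ) + 1) * ((l₁ : ℚ) + (l₂ : ℚ) + 2)) * (1/24)
          by ring]
    have hs : ∀ (q : ℚ) (x : BorelRingSU3Q), q • x = algebraMap ℚ BorelRingSU3Q q * x :=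
      fun q x => Algebra.smul_def q x
    simp only [hs, map_mul, map_add, map_one, map_ofNat, map_intCast]
    set t : BorelRingSU3Q := algebraMap ℚ BorelRingSU3Q (1/24)
    set u : BorelRingSU3Q := (l₁ : BorelRingSU3Q)
    set v : BorelRingSU3Q := (l₂ : BorelRingSU3Q)
    linear_combination (t * (24 + 44*(u+v) + 24*(u+v)^2 + 4*(u+v)^3)) * h2 +
      (t * (12 + 8*(u+v) + 44*v + 24*(u+v)*v + 24*v^2 + 12*(u+v)*v^2)) * h3 +
      (t * (8*v + 12*v^2 + 4*v^3)) * h4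
end

section
/- In the ring R = ℤ[x₁,x₂]/I, for all integers λ₁, λ₂, one has ((λ₁+λ₂+2)x₁ + (λ₂+1)x₂)³ = 3(λ₁+1)(λ₂+1)(λ₁+λ₂+2)·x₁²x₂. Equivalently, (1/3!)·∫ (F_{λ+ρ})³ = (1/2)(λ₁+1)(λ₂+1)(λ₁+λ₂+2): the modified geometric charge of the regular SU(3) brane labelled λ equals the naïve geometric charge evaluated at the quantum-shifted weight λ + ρ, i.e. Q_geo(λ) = ∫ e^{λ+ρ}. -/
open MvPolynomial

/-- In `R = ℤ[x₁,x₂]/(x₁² + x₁x₂ + x₂², x₁³)`, the class of the quantum-shifted weight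
`λ + ρ`, namely `(λ₁+λ₂+2)x₁ + (λ₂+1)x₂`, satisfies
`((λ₁+λ₂+2)x₁ + (λ₂+1)x₂)³ = 3(λ₁+1)(λ₂+1)(λ₁+λ₂+2)·x₁²x₂`; i.e. the modified geometric
charge `Q_geo(λ) = (1/3!)∫(F_{λ+ρ})³ = (1/2)(λ₁+1)(λ₂+1)(λ₁+λ₂+2)` equals the naïve
geometric charge evaluated at the shifted weight `λ + ρ`: `Q_geo(λ) = ∫ e^{λ+ρ}`. -/
theorem borelRingSU3_shifted_weight_cube (l₁ l₂ : ℤ) :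
    ((l₁ + l₂ + 2) • bx₁ + (l₂ + 1) • bx₂) ^ 3 =
      (3 * (l₁ + 1) * (l₂ + 1) * (l₁ + l₂ + 2)) • (bx₁ ^ 2 * bx₂) := by

  have hsm : ∀ (c : ℤ) (p : MvPolynomial (Fin 2) ℤ),
      c • Ideal.Quotient.mk borelIdealSU3 p = Ideal.Quotient.mk borelIdealSU3 (C c * p) := by
    intro c p
    rw [map_mul, zsmul_eq_mul]
    congr 1
  unfold bx₁ bx₂
  rw [hsm, hsm, ← map_pow, ← map_mul, hsm, ← map_add, ← map_pow]
  rw [Ideal.Quotient.eq]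
  unfold borelIdealSU3
  rw [Ideal.mem_span_pair]
  set a : MvPolynomial (Fin 2) ℤ := C (l₁ + l₂ + 2) with ha
  set b : MvPolynomial (Fin 2) ℤ := C (l₂ + 1) with hb
  refine ⟨(3 * a * b ^ 2 - b ^ 3) * X 0 + b ^ 3 * X 1,
    a ^ 3 - 3 * a * b ^ 2 + b ^ 3, ?_⟩
  have h3 : C (3 * (l₁ + 1) * (l₂ + 1) * (l₁ + l₂ + 2)) = 3 * (a - b) * b * a := by
    rw [ha, hb, show ((3 : MvPolynomial (Fin 2) ℤ)) = C 3 from rfl, ← C_sub, ← C_mul,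
      ← C_mul, ← C_mul]
    congr 1
    ring
  rw [h3]
  ring
end
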